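/- Let σ_m, σ_f, c be real numbers with 0 < σ_m ≤ σ_f and 0 ≤ c ≤ 1, and define the Hashin-Shtrikman bounds σ⁺ = σ_f (1 − 3(1 − c)(σ_f − σ_m) / (3σ_f − c(σ_f − σ_m))) and σ⁻ = σ_m (1 + 3c(σ_f − σ_m) / (3σ_m + (1 − c)(σ_f − σ_m))). Then σ⁻ ≤ σ⁺, with equality if σ_m = σ_f, c = 0 or c = 1; moreover σ_m ≤ σ⁻ and σ⁺ ≤ σ_f. -/

import Mathlib

/-- Hashin-Shtrikman upper bound for a two-phase conductivity mixture. -/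
noncomputable def hsUpper (σm σf c : ℝ) : ℝ :=
  σf * (1 - 3 * (1 - c) * (σf - σm) / (3 * σf - c * (σf - σm)))

/-- Hashin-Shtrikman lower bound for a two-phase conductivity mixture. -/
noncomputable def hsLower (σm σf c : ℝ) : ℝ :=
  σm * (1 + 3 * c * (σf - σm) / (3 * σm + (1 - c) * (σf - σm)))

/-- For `0 < σ_m ≤ σ_f` and `0 ≤ c ≤ 1`, the Hashin-Shtrikman bounds satisfy
`σ⁻ ≤ σ⁺`, with equality if `σ_m = σ_f`, `c = 0` or `c = 1`; moreover
`σ_m ≤ σ⁻` and `σ⁺ ≤ σ_f`. -/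
theorem hashin_shtrikman_bounds
    (σm σf c : ℝ) (hσm : 0 < σm) (hσ : σm ≤ σf) (hc0 : 0 ≤ c) (hc1 : c ≤ 1) :
    hsLower σm σf c ≤ hsUpper σm σf c ∧
    (σm = σf ∨ c = 0 ∨ c = 1 → hsLower σm σf c = hsUpper σm σf c) ∧
    σm ≤ hsLower σm σf c ∧
    hsUpper σm σf c ≤ σf := by
  have hd : 0 ≤ σf - σm := by linarith
  have hc1' : 0 ≤ 1 - c := by linarith
  have hD1 : 0 < 3 * σf - c * (σf - σm) := by nlinarith
  have hD2 : 0 < 3 * σm + (1 - c) * (σf - σm) := by nlinarith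
  refine ⟨?_, ?_, ?_, ?_⟩
  · unfold hsLower hsUpper
    have e1 : σm * (1 + 3 * c * (σf - σm) / (3 * σm + (1 - c) * (σf - σm)))
        = (σm * ((3 * σm + (1 - c) * (σf - σm)) + 3 * c * (σf - σm))) /
          (3 * σm + (1 - c) * (σf - σm)) := by
      field_simp
    have e2 : σf * (1 - 3 * (1 - c) * (σf - σm) / (3 * σf - c * (σf - σm)))
        = (σf * ((3 * σf - c * (σf - σm)) - 3 * (1 - c) * (σf - σm))) /
          (3 * σf - c * (σf - σm)) := by
      rw [eq_div_iff hD1.ne', mul_assoc, sub_mul, one_mul, div_mul_cancel₀ _ hD1.ne']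
    rw [e1, e2, div_le_div_iff₀ hD2 hD1]
    nlinarith [mul_nonneg (mul_nonneg (mul_nonneg hc0 hc1') hd) (mul_nonneg hd hd)]
  · have hf : σf ≠ 0 := (lt_of_lt_of_le hσm hσ).ne'
    rintro (h | h | h) <;> subst h <;> unfold hsLower hsUpper <;>
      field_simp <;> ring
  · unfold hsLower
    nlinarith [mul_nonneg (mul_nonneg hσm.le hc0) hd, div_nonneg (by nlinarith : (0:ℝ) ≤ 3 * c * (σf - σm)) hD2.le]
  · unfold hsUpper
    nlinarith [div_nonneg (by nlinarith : (0:ℝ) ≤ 3 * (1 - c) * (σf - σm)) hD1.le, (le_of_lt hσm)]
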